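/- arXiv:2011.09885 — 2 statements merged into one kernel-verified Lean document; each statement's English description precedes it below -/
import Mathlib

section
/- For every natural number N ≥ 1, if x ∈ [0, 10^{-6} N^{-1}] and t ∈ [0, 10^{-6} N^{-2}], then |w_N(x,t)| ≥ N/2. In particular sup_{0<t<1}|w_N(x,t)| ≥ N/2 for every x ∈ [0, 10^{-6} N^{-1}], so the exponent 3/4 in the L^4 maximal estimate for quadratic Weyl sums cannot be improved. -/
open Real Set

/-- The quadratic Weyl sum `w_N(x,t) = Σ_{n=1}^N e^{2πi(nx + n²t)}`. -/
noncomputable def weylSum (N : ℕ) (x t : ℝ) : ℂ :=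
  ∑ n ∈ Finset.Icc 1 N, Complex.exp (2 * Real.pi * Complex.I * (n * x + n ^ 2 * t))

/-!
For `1 ≤ n ≤ N` the phase `2π(nx + n²t)` has size at most `4πδ ≤ 1` on the box
`|x| ≤ δ/N`, `|t| ≤ δ/N²`, so every term of the Weyl sum has real part
`cos(2π(nx + n²t)) ≥ 1 - 1²/2`. Hence the real part of the sum, and a fortiori its modulus,
is at least `N/2`. Since `|w_N| ≤ N`, the supremum over `0 < t < 1` is finite and bounded
below by the value at `t = 10⁻⁶ N⁻²`.
-/

lemma Finset.card_mul_le_norm_sum_of_le_re {ι : Type*} (s : Finset ι) (f : ι → ℂ) {c : ℝ}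
    (h : ∀ i ∈ s, c ≤ (f i).re) : s.card * c ≤ ‖∑ i ∈ s, f i‖ :=
  calc s.card * c = ∑ _i ∈ s, c := by rw [Finset.sum_const, nsmul_eq_mul]
    _ ≤ ∑ i ∈ s, (f i).re := Finset.sum_le_sum h
    _ = (∑ i ∈ s, f i).re := (Complex.re_sum s f).symm
    _ ≤ ‖∑ i ∈ s, f i‖ := Complex.re_le_norm _

lemma Real.half_le_cos_of_abs_le_one {θ : ℝ} (hθ : |θ| ≤ 1) : 1 / 2 ≤ cos θ := by
  have hsq : θ ^ 2 ≤ 1 := by nlinarith [sq_abs θ, abs_nonneg θ]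
  linarith [one_sub_sq_div_two_le_cos (x := θ)]

lemma weylSum_eq_sum_exp_ofReal_mul_I (N : ℕ) (x t : ℝ) :
    weylSum N x t = ∑ n ∈ Finset.Icc 1 N,
      Complex.exp (((2 * π * (n * x + n ^ 2 * t) : ℝ) : ℂ) * Complex.I) :=
  Finset.sum_congr rfl fun n _ => by push_cast; ring_nf

lemma norm_weylSum_le (N : ℕ) (x t : ℝ) : ‖weylSum N x t‖ ≤ N := by
  rw [weylSum_eq_sum_exp_ofReal_mul_I]
  calc _ ≤ ∑ _n ∈ Finset.Icc 1 N, (1 : ℝ) :=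
        norm_sum_le_of_le _ fun n _ => (Complex.norm_exp_ofReal_mul_I _).le
    _ = N := by simp

lemma abs_weylSum_phase_le {N n : ℕ} (hn : n ∈ Finset.Icc 1 N) {x t δ : ℝ}
    (hx : |x| ≤ δ / N) (ht : |t| ≤ δ / N ^ 2) : |n * x + n ^ 2 * t| ≤ 2 * δ := by
  obtain ⟨hn1, hnN⟩ := Finset.mem_Icc.mp hn
  have hn0 : (0 : ℝ) < n := by exact_mod_cast hn1
  have hnN' : (n : ℝ) ≤ N := by exact_mod_cast hnN
  have hN0 : (N : ℝ) ≠ 0 := (hn0.trans_le hnN').ne'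
  have hnx : |n * x| ≤ δ :=
    calc |n * x| = n * |x| := by rw [abs_mul, Nat.abs_cast]
      _ ≤ N * (δ / N) := by gcongr
      _ = δ := by field_simp
  have hnt : |n ^ 2 * t| ≤ δ :=
    calc |n ^ 2 * t| = n ^ 2 * |t| := by rw [abs_mul, abs_pow, Nat.abs_cast]
      _ ≤ N ^ 2 * (δ / N ^ 2) := by gcongr
      _ = δ := by field_simp
  linarith [abs_add_le (n * x) (n ^ 2 * t)]

theorem half_le_norm_weylSum {N : ℕ} {x t δ : ℝ} (hδ : 4 * π * δ ≤ 1)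
    (hx : |x| ≤ δ / N) (ht : |t| ≤ δ / N ^ 2) : (N : ℝ) / 2 ≤ ‖weylSum N x t‖ := by
  have hterm : ∀ n ∈ Finset.Icc 1 N,
      1 / 2 ≤ (Complex.exp (((2 * π * (n * x + n ^ 2 * t) : ℝ) : ℂ) * Complex.I)).re := by
    intro n hn
    have hphase : |2 * π * (n * x + n ^ 2 * t)| ≤ 1 := by
      rw [abs_mul, abs_of_pos (by positivity : 0 < 2 * π)]
      nlinarith [abs_weylSum_phase_le hn hx ht, pi_pos]
    rw [Complex.exp_ofReal_mul_I_re]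
    exact half_le_cos_of_abs_le_one hphase
  have := Finset.card_mul_le_norm_sum_of_le_re (Finset.Icc 1 N) _ hterm
  rwa [← weylSum_eq_sum_exp_ofReal_mul_I, Nat.card_Icc, Nat.add_sub_cancel, mul_one_div] at this

/-- on the box `[0, 10⁻⁶ N⁻¹] × [0, 10⁻⁶ N⁻²]` the quadratic Weyl sum
has size at least `N/2`; in particular `sup_{0<t<1} |w_N(x,·)| ≥ N/2` there. -/
theorem weyl_large_near_origin :
    ∀ N : ℕ, 1 ≤ N → ∀ x ∈ Set.Icc (0:ℝ) ((10:ℝ) ^ (-6 : ℤ) * (N : ℝ)⁻¹),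
      (∀ t ∈ Set.Icc (0:ℝ) ((10:ℝ) ^ (-6 : ℤ) * ((N : ℝ) ^ 2)⁻¹),
        (N : ℝ) / 2 ≤ ‖weylSum N x t‖) ∧
      (N : ℝ) / 2 ≤ ⨆ t ∈ Set.Ioo (0:ℝ) 1, ‖weylSum N x t‖ := by
  intro N hN x hx
  have hδ : 4 * π * (10 : ℝ) ^ (-6 : ℤ) ≤ 1 := by have := pi_lt_four; norm_num; linarith
  have hbox : ∀ t ∈ Icc (0 : ℝ) ((10 : ℝ) ^ (-6 : ℤ) * ((N : ℝ) ^ 2)⁻¹),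
      (N : ℝ) / 2 ≤ ‖weylSum N x t‖ := fun t ht =>
    half_le_norm_weylSum hδ (by rw [abs_of_nonneg hx.1, div_eq_mul_inv]; exact hx.2)
      (by rw [abs_of_nonneg ht.1, div_eq_mul_inv]; exact ht.2)
  refine ⟨hbox, ?_⟩
  set t₀ : ℝ := (10 : ℝ) ^ (-6 : ℤ) * ((N : ℝ) ^ 2)⁻¹
  have hN2 : (1 : ℝ) ≤ (N : ℝ) ^ 2 := one_le_pow₀ (by exact_mod_cast hN)
  have ht₀ : t₀ ∈ Ioo (0 : ℝ) 1 :=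
    ⟨by positivity, (mul_le_of_le_one_right (by positivity) (inv_le_one_of_one_le₀ hN2)).trans_lt
      (by norm_num)⟩
  have hbdd : BddAbove (⋃ t, range fun _ : t ∈ Ioo (0 : ℝ) 1 => ‖weylSum N x t‖) := by
    refine ⟨N, ?_⟩
    simp only [mem_upperBounds, mem_iUnion, mem_range]
    rintro _ ⟨t, _, rfl⟩
    exact norm_weylSum_le N x t
  exact (hbox t₀ ⟨ht₀.1.le, le_rfl⟩).trans
    (le_ciSup₂ (f := fun t _ => ‖weylSum N x t‖) hbdd t₀ ht₀)
end

section
/- There exists an absolute constant c > 0 with the following property. Let N > 1 be a natural number and let q be an odd integer with 1 ≤ q ≤ N^{1/2}. Let a, b be integers with 1 ≤ a, b < q and gcd(a,q) = 1. If x, t are real numbers with |x − b/q| ≤ 1/(100N) and |t − a/q| ≤ 1/(100N²), then |w_N(x,t)| ≥ c N / q^{1/2}. -/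
open Real Set

/-!
Write `x = b/q + β` and `t = a/q + γ`, so that `e(nx + n²t) = e((an² + bn)/q) · e(nβ + n²γ)`.
The first factor is `q`-periodic in `n`; by the bounds on `β` and `γ` the second one moves by
`O(q/N)` across a block of `q` consecutive integers and stays within `3π/50` of `1` on `[0, N]`.
Cutting `[1, N]` into `⌊N/q⌋` complete blocks and a tail of fewer than `q` terms, each block is
the complete quadratic Gauss sum, of modulus `√q` because `q` is odd and `(a, q) = 1`, times
almost the same unimodular number close to `1`. The blocks therefore add up coherently to
`≈ (N/q)√q`, while the approximation and tail errors are `O(q)`, which is smaller since `q ≤ √N`.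
-/

open Finset ComplexConjugate FourierTransform

namespace AddChar

variable {R : Type*} [CommRing R] [Fintype R]

theorem norm_sum_quadratic_sq {ψ : AddChar R ℂ} (hψ : ψ.IsPrimitive) {A : R}
    (hA : IsUnit (2 * A)) (B : R) :
    ‖∑ r, ψ (A * r ^ 2 + B * r)‖ ^ 2 = Fintype.card R := by
  classical
  set S := ∑ r, ψ (A * r ^ 2 + B * r)
  -- substituting `r = s + h`, the sum over `s` becomes a character sum, which vanishes unless
  -- `2 * A * h = 0`, i.e. `h = 0`
  have hshift : ∀ s, ∑ r, ψ (A * r ^ 2 + B * r) * conj (ψ (A * s ^ 2 + B * s)) =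
      ∑ h, ψ (A * h ^ 2 + B * h) * ψ (s * (2 * A * h)) := fun s => by
    refine (Fintype.sum_equiv (Equiv.addLeft s) _ _ fun h => ?_).symm
    rw [← map_neg_eq_conj, ← map_add_eq_mul, ← map_add_eq_mul, Equiv.coe_addLeft]
    ring_nf
  have hS : S * conj S = Fintype.card R := by
    calc S * conj S
        = ∑ s, ∑ r, ψ (A * r ^ 2 + B * r) * conj (ψ (A * s ^ 2 + B * s)) := by
          rw [map_sum, sum_mul_sum, sum_comm]
      _ = ∑ h, ψ (A * h ^ 2 + B * h) * ∑ s, ψ (s * (2 * A * h)) := by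
          simp_rw [hshift, mul_sum]; exact sum_comm
      _ = Fintype.card R := by
          simp_rw [sum_mulShift _ hψ, hA.mul_right_eq_zero]
          simp
  rw [Complex.sq_norm, ← Complex.ofReal_inj, ← Complex.mul_conj, hS, Complex.ofReal_natCast]

end AddChar

namespace ZMod

theorem sum_range_natCast_add {M : Type*} [AddCommMonoid M] (q : ℕ) [NeZero q]
    (g : ZMod q → M) (k : ℕ) : ∑ i ∈ range q, g ((k + i : ℕ) : ZMod q) = ∑ r, g r := by
  rw [← Fintype.sum_equiv (Equiv.addLeft (k : ZMod q)) (fun r => g (k + r)) g fun _ => rfl]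
  exact sum_nbij' Nat.cast val (by simp) (fun r _ => mem_range.2 r.val_lt)
    (fun i hi => val_cast_of_lt (mem_range.1 hi)) (fun r _ => natCast_zmod_val r)
    fun i _ => by simp

theorem norm_sum_stdAddChar_quadratic {q : ℕ} [NeZero q] (hq : Odd q) {a : ℕ}
    (ha : a.Coprime q) (b : ZMod q) :
    ‖∑ r, stdAddChar ((a : ZMod q) * r ^ 2 + b * r)‖ = √q := by
  have h2a : IsUnit (2 * (a : ZMod q)) := by
    simpa using (isUnit_iff_coprime (2 * a) q).2 ((Nat.coprime_two_left.2 hq).mul_left ha)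
  rw [← Real.sqrt_sq (norm_nonneg _), AddChar.norm_sum_quadratic_sq (isPrimitive_stdAddChar q) h2a,
    ZMod.card]

end ZMod

namespace Real

theorem norm_fourierChar_sub_fourierChar_le (θ θ' : ℝ) :
    ‖(𝐞 θ : ℂ) - 𝐞 θ'‖ ≤ 2 * π * |θ - θ'| := by
  have h : (𝐞 θ : ℂ) = 𝐞 θ' * 𝐞 (θ - θ') := by
    rw [← Circle.coe_mul, ← AddChar.map_add_eq_mul, add_sub_cancel]
  rw [h, ← mul_sub_one, norm_mul, Circle.norm_coe, one_mul, fourierChar_apply, mul_comm _ Complex.I]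
  calc _ ≤ ‖2 * π * (θ - θ')‖ := norm_exp_I_mul_ofReal_sub_one_le
    _ = 2 * π * |θ - θ'| := by rw [Real.norm_eq_abs, abs_mul, abs_of_pos two_pi_pos]

theorem fourierChar_natCast_div (q k : ℕ) [NeZero q] :
    (𝐞 (k / q) : ℂ) = ZMod.stdAddChar (k : ZMod q) := by
  rw [ZMod.stdAddChar_apply, ZMod.toCircle_natCast, fourierChar_apply]
  push_cast
  ring_nf

end Real

theorem card_mul_sub_le_norm_sum {ι E : Type*} [NormedAddCommGroup E] [NormedSpace ℝ E]
    (s : Finset ι) (z : ι → E) (v : E) {η : ℝ} (hz : ∀ j ∈ s, ‖z j - v‖ ≤ η) :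
    #s * (‖v‖ - η) ≤ ‖∑ j ∈ s, z j‖ := by
  have hdev : ‖∑ j ∈ s, (z j - v)‖ ≤ #s * η := by
    simpa using norm_sum_le_of_le s hz
  have hv : ‖∑ j ∈ s, v‖ = #s * ‖v‖ := by rw [sum_const, RCLike.norm_nsmul ℝ, nsmul_eq_mul]
  have := norm_sub_le (∑ j ∈ s, z j) (∑ j ∈ s, (z j - v))
  rw [← sum_sub_distrib] at this
  simp only [sub_sub_cancel, hv] at this
  linarith

theorem sum_range_mul_eq_sum_sum {M : Type*} [AddCommMonoid M] (f : ℕ → M) (m q : ℕ) :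
    ∑ n ∈ range (m * q), f n = ∑ j ∈ range m, ∑ i ∈ range q, f (j * q + i) := by
  induction m with
  | zero => simp
  | succ m ih => rw [add_one_mul, sum_range_add, ih, sum_range_succ]

theorem norm_sum_range_mul_sub_le {G u z : ℕ → ℂ} {m q : ℕ} {S : ℂ} {δ : ℝ}
    (hG : ∀ n, ‖G n‖ ≤ 1) (hS : ∀ j, ∑ i ∈ range q, G (j * q + i) = S)
    (hu : ∀ j < m, ∀ i < q, ‖u (j * q + i) - z j‖ ≤ δ) :
    ‖∑ n ∈ range (m * q), G n * u n - S * ∑ j ∈ range m, z j‖ ≤ m * q * δ := by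
  have hdiff : ∑ n ∈ range (m * q), G n * u n - S * ∑ j ∈ range m, z j =
      ∑ j ∈ range m, ∑ i ∈ range q, G (j * q + i) * (u (j * q + i) - z j) := by
    rw [sum_range_mul_eq_sum_sum, mul_sum, ← sum_sub_distrib]
    refine sum_congr rfl fun j _ => ?_
    simp only [← hS j, sum_mul, ← sum_sub_distrib, mul_sub]
  rw [hdiff]
  calc _ ≤ ∑ j ∈ range m, ∑ i ∈ range q, δ := by
        refine (norm_sum_le _ _).trans (sum_le_sum fun j hj => (norm_sum_le _ _).trans ?_)
        refine sum_le_sum fun i hi => ?_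
        rw [norm_mul]
        exact (mul_le_of_le_one_left (norm_nonneg _) (hG _)).trans
          (hu j (mem_range.1 hj) i (mem_range.1 hi))
    _ = m * q * δ := by simp [mul_assoc]

theorem le_norm_sum_of_block_sums {G u z : ℕ → ℂ} {N q : ℕ} {S : ℂ} {δ η : ℝ}
    (hG : ∀ n, ‖G n‖ ≤ 1) (hu : ∀ n, ‖u n‖ ≤ 1) (hS : ∀ j, ∑ i ∈ range q, G (j * q + i) = S)
    (hδ : ∀ j < N / q, ∀ i < q, ‖u (j * q + i) - z j‖ ≤ δ)
    (hη : ∀ j < N / q, ‖z j - 1‖ ≤ η) :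
    ‖S‖ * ((N / q : ℕ) * (1 - η)) - (N / q : ℕ) * q * δ - (N - (N / q : ℕ) * q) ≤
      ‖∑ n ∈ range N, G n * u n‖ := by
  set M := N / q
  have hMN : M * q ≤ N := Nat.div_mul_le_self N q
  set head := ∑ n ∈ range (M * q), G n * u n
  set tail := ∑ n ∈ Ico (M * q) N, G n * u n
  set centres := ∑ j ∈ range M, z j
  have hblock : ‖head - S * centres‖ ≤ M * q * δ := norm_sum_range_mul_sub_le hG hS hδ
  have hcentres : M * (1 - η) ≤ ‖centres‖ := by
    simpa using card_mul_sub_le_norm_sum (range M) z 1 fun j hj => hη j (mem_range.1 hj)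
  have htail : ‖tail‖ ≤ N - M * q := by
    have hGu : ∀ n, ‖G n * u n‖ ≤ 1 := fun n => by
      rw [norm_mul]; exact mul_le_one₀ (hG n) (norm_nonneg _) (hu n)
    simpa [Nat.cast_sub hMN] using norm_sum_le_of_le (Ico (M * q) N) fun n _ => hGu n
  have htri : ‖S * centres‖ ≤ ‖head + tail‖ + ‖head - S * centres‖ + ‖tail‖ :=
    calc ‖S * centres‖ = ‖(head + tail) - (head - S * centres) - tail‖ := by ring_nf
      _ ≤ ‖(head + tail) - (head - S * centres)‖ + ‖tail‖ := norm_sub_le _ _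
      _ ≤ _ := by gcongr; exact norm_sub_le _ _
  rw [← sum_range_add_sum_Ico _ hMN]
  rw [norm_mul] at htri
  linarith [mul_le_mul_of_nonneg_left hcentres (norm_nonneg S)]

theorem abs_quadratic_sub_le {N : ℕ} {ε β γ : ℝ} (hβ : |β| ≤ ε / N) (hγ : |γ| ≤ ε / N ^ 2)
    {n m : ℕ} (hn : n ≤ N) (hm : m ≤ N) :
    |(n * β + n ^ 2 * γ) - (m * β + m ^ 2 * γ)| ≤ 3 * ε * |(n : ℝ) - m| / N := by
  rcases Nat.eq_zero_or_pos N with rfl | hN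
  · obtain rfl : n = 0 := by omega
    obtain rfl : m = 0 := by omega
    simp
  have hN : (0 : ℝ) < N := by exact_mod_cast hN
  have hnm : (n : ℝ) + m ≤ 2 * N := by
    have : n + m ≤ 2 * N := by omega
    exact_mod_cast this
  have hfactor : |β + (n + m) * γ| ≤ 3 * ε / N :=
    calc _ ≤ |β| + (n + m) * |γ| := by
          refine (abs_add_le _ _).trans_eq ?_
          rw [abs_mul, abs_of_nonneg (by positivity : (0 : ℝ) ≤ n + m)]
      _ ≤ ε / N + 2 * N * (ε / N ^ 2) := by gcongr
      _ = 3 * ε / N := by field_simp; ring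
  calc _ = |(n : ℝ) - m| * |β + (n + m) * γ| := by rw [← abs_mul]; ring_nf
    _ ≤ |(n : ℝ) - m| * (3 * ε / N) := by gcongr
    _ = _ := by ring

theorem norm_fourierChar_quadratic_sub_le {N : ℕ} {β γ : ℝ} (hβ : |β| ≤ 1 / (100 * N))
    (hγ : |γ| ≤ 1 / (100 * N ^ 2)) {n m : ℕ} (hn : n ≤ N) (hm : m ≤ N) :
    ‖(𝐞 (n * β + n ^ 2 * γ) : ℂ) - 𝐞 (m * β + m ^ 2 * γ)‖ ≤ 3 * π * |(n : ℝ) - m| / (50 * N) :=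
  calc _ ≤ 2 * π * (3 * (1 / 100) * |(n : ℝ) - m| / N) :=
        (Real.norm_fourierChar_sub_fourierChar_le _ _).trans <| by
          gcongr
          exact abs_quadratic_sub_le (by rwa [div_div]) (by rwa [div_div]) hn hm
    _ = _ := by ring

theorem norm_fourierChar_quadratic_sub_one_le {N : ℕ} {β γ : ℝ} (hβ : |β| ≤ 1 / (100 * N))
    (hγ : |γ| ≤ 1 / (100 * N ^ 2)) {n : ℕ} (hn : n ≤ N) :
    ‖(𝐞 (n * β + n ^ 2 * γ) : ℂ) - 1‖ ≤ 3 * π / 50 := by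
  rcases (Nat.zero_le n).eq_or_lt with rfl | hn₀
  · simp
    positivity
  have hN : (0 : ℝ) < N := by exact_mod_cast hn₀.trans_le hn
  calc _ ≤ 3 * π * |(n : ℝ) - (0 : ℕ)| / (50 * N) := by
        simpa using norm_fourierChar_quadratic_sub_le hβ hγ hn (Nat.zero_le N)
    _ ≤ 3 * π * N / (50 * N) := by
        rw [Nat.cast_zero, sub_zero, abs_of_nonneg (Nat.cast_nonneg _)]
        gcongr
    _ = 3 * π / 50 := by field_simp

theorem exp_quadratic_eq (q a b n : ℕ) [NeZero q] (x t : ℝ) :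
    Complex.exp (2 * π * Complex.I * (n * x + n ^ 2 * t)) =
      ZMod.stdAddChar ((a : ZMod q) * (n : ZMod q) ^ 2 + (b : ZMod q) * (n : ZMod q)) *
        𝐞 (n * (x - b / q) + n ^ 2 * (t - a / q)) := by
  have hq : (q : ℝ) ≠ 0 := NeZero.ne _
  have hexp : Complex.exp (2 * π * Complex.I * (n * x + n ^ 2 * t)) = 𝐞 (n * x + n ^ 2 * t) := by
    rw [Real.fourierChar_apply]
    push_cast
    ring_nf
  have hsplit : (n : ℝ) * x + n ^ 2 * t =
      ((a * n ^ 2 + b * n : ℕ) : ℝ) / q + (n * (x - b / q) + n ^ 2 * (t - a / q)) := by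
    push_cast
    field_simp
    ring
  rw [hexp, hsplit, AddChar.map_add_eq_mul, Circle.coe_mul, Real.fourierChar_natCast_div]
  push_cast
  rfl

theorem weylSum_eq_sum_range (N q a b : ℕ) [NeZero q] (x t : ℝ) :
    weylSum N x t = ∑ n ∈ range N,
      ZMod.stdAddChar
          ((a : ZMod q) * ((n + 1 : ℕ) : ZMod q) ^ 2 + (b : ZMod q) * ((n + 1 : ℕ) : ZMod q)) *
        𝐞 ((n + 1 : ℕ) * (x - b / q) + ((n + 1 : ℕ) : ℝ) ^ 2 * (t - a / q)) := by
  simp_rw [← exp_quadratic_eq]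
  rw [range_eq_Ico,
    sum_Ico_add' (fun n : ℕ => Complex.exp (2 * π * Complex.I * (n * x + n ^ 2 * t))),
    zero_add, Finset.Ico_add_one_right_eq_Icc, weylSum]

theorem abs_natCast_sub_half_le {q i : ℕ} (hi : i < q) : |(i : ℝ) - (q / 2 : ℕ)| ≤ q / 2 := by
  have h₁ : ((2 * (q / 2) : ℕ) : ℝ) ≤ q := by exact_mod_cast Nat.mul_div_le q 2
  have h₂ : (q : ℝ) ≤ ((2 * (q / 2) + 1 : ℕ) : ℝ) := by
    exact_mod_cast (by omega : q ≤ 2 * (q / 2) + 1)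
  have h₃ : (i : ℝ) + 1 ≤ q := by exact_mod_cast hi
  push_cast at h₁ h₂
  rw [abs_le]
  constructor <;> linarith [(Nat.cast_nonneg i : (0 : ℝ) ≤ i)]

theorem le_norm_weylSum {N q a b : ℕ} [NeZero q] (hq : Odd q) (ha : a.Coprime q) {x t : ℝ}
    (hx : |x - b / q| ≤ 1 / (100 * N)) (ht : |t - a / q| ≤ 1 / (100 * N ^ 2)) :
    (1 - 3 * π / 50) * (N / q : ℕ) * √q - 3 * π * q / 100 - (N - (N / q : ℕ) * q) ≤
      ‖weylSum N x t‖ := by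
  set M := N / q
  set g : ZMod q → ℂ := fun r => ZMod.stdAddChar ((a : ZMod q) * r ^ 2 + (b : ZMod q) * r)
  set e : ℕ → ℂ := fun n => 𝐞 (n * (x - b / q) + n ^ 2 * (t - a / q))
  have hMN : M * q ≤ N := Nat.div_mul_le_self N q
  have hindex : ∀ j < M, ∀ i < q, j * q + i + 1 ≤ N := fun j hj i hi => by
    have := (add_one_mul j q ▸ Nat.mul_le_mul_right q hj).trans hMN
    omega
  have hq2 : q / 2 < q := Nat.div_lt_self (NeZero.pos q) one_lt_two
  have hδ : ∀ j < M, ∀ i < q, ‖e (j * q + i + 1) - e (j * q + q / 2 + 1)‖ ≤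
      3 * π * q / (100 * N) := fun j hj i hi => by
    have hd : |((j * q + i + 1 : ℕ) : ℝ) - ((j * q + q / 2 + 1 : ℕ) : ℝ)| ≤ q / 2 := by
      push_cast
      convert abs_natCast_sub_half_le hi using 2
      ring
    calc _ ≤ 3 * π * (q / 2) / (50 * N) :=
          (norm_fourierChar_quadratic_sub_le hx ht (hindex j hj i hi) (hindex j hj _ hq2)).trans
            (by gcongr)
      _ = _ := by ring
  have hη : ∀ j < M, ‖e (j * q + q / 2 + 1) - 1‖ ≤ 3 * π / 50 := fun j hj =>
    norm_fourierChar_quadratic_sub_one_le hx ht (hindex j hj _ hq2)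
  have hblocks := le_norm_sum_of_block_sums (G := fun n => g ((n + 1 : ℕ) : ZMod q))
    (u := fun n => e (n + 1)) (fun n => (AddChar.norm_apply _ _).le)
    (fun n => (Circle.norm_coe _).le)
    (fun j => by simpa only [add_right_comm] using ZMod.sum_range_natCast_add q g (j * q + 1))
    hδ hη
  have herr : M * q * (3 * π * q / (100 * N)) ≤ 3 * π * q / 100 := by
    rw [show (M : ℝ) * q * (3 * π * q / (100 * N)) = M * q / N * (3 * π * q / 100) by ring]
    exact mul_le_of_le_one_left (by positivity)
      (div_le_one_of_le₀ (by exact_mod_cast hMN) (Nat.cast_nonneg _))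
  rw [ZMod.norm_sum_stdAddChar_quadratic hq ha, ← weylSum_eq_sum_range] at hblocks
  linarith

theorem weyl_lower_bound_arith {N q M : ℝ} (hq : 1 ≤ q) (hN : q ^ 2 ≤ N) (hNM : N - M * q ≤ q - 1) :
    1 / 100 * N / √q ≤ (1 - 3 * π / 50) * M * √q - 3 * π * q / 100 - (N - M * q) := by
  obtain ⟨s, hs, rfl⟩ : ∃ s, 1 ≤ s ∧ q = s ^ 2 :=
    ⟨√q, Real.one_le_sqrt.2 hq, (Real.sq_sqrt (by linarith)).symm⟩
  rw [Real.sqrt_sq (by linarith), div_le_iff₀ (by linarith)]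
  have hπ := Real.pi_lt_d2
  -- with `q = s²` and `N ≥ s⁴` the claim is linear and decreasing in `π`; at `π = 3.15` it is
  -- `hpoly`
  have hpoly : 0 ≤ 0.801 * s ^ 4 - 1.0945 * s ^ 3 - 0.811 * s ^ 2 + s + 0.811 := by
    nlinarith [sq_nonneg (s - 1.3), sq_nonneg (s ^ 2 - 1.69),
      mul_nonneg (by linarith : (0:ℝ) ≤ s - 1) (sq_nonneg (s - 1.3))]
  have hslope : 0 ≤ 0.06 * s ^ 4 - 0.06 * (s ^ 2 - 1) + 0.03 * s ^ 3 := by nlinarith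
  nlinarith [mul_le_mul_of_nonneg_left hN (by linarith : (0:ℝ) ≤ 1 - 3 * π / 50 - 1 / 100),
    mul_le_mul_of_nonneg_left hNM (by linarith : (0:ℝ) ≤ 1 - 3 * π / 50 + s),
    mul_nonneg (by linarith : (0:ℝ) ≤ 3.15 - π) hslope]

/-- the major-arc lower bound: near a rational point `(b/q, a/q)`
with `q` odd, `q ≤ N^{1/2}` and `gcd(a,q) = 1`, the Weyl sum has size `≥ c N / √q`. -/
theorem weyl_major_arc_lower_bound :
    ∃ c > (0 : ℝ), ∀ N : ℕ, 1 < N → ∀ q : ℕ, Odd q → 1 ≤ q →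
      (q : ℝ) ≤ (N : ℝ) ^ ((1:ℝ)/2) → ∀ a b : ℕ, 1 ≤ a → a < q → 1 ≤ b → b < q →
      Nat.gcd a q = 1 → ∀ x t : ℝ,
      |x - (b : ℝ) / (q : ℝ)| ≤ 1 / (100 * (N : ℝ)) →
      |t - (a : ℝ) / (q : ℝ)| ≤ 1 / (100 * (N : ℝ) ^ 2) →
      c * (N : ℝ) / Real.sqrt (q : ℝ) ≤ ‖weylSum N x t‖ := by
  refine ⟨1 / 100, by norm_num, fun N _ q hq hq1 hqN a b _ _ _ _ hgcd x t hx ht => ?_⟩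
  have : NeZero q := ⟨by omega⟩
  have hq2N : (q : ℝ) ^ 2 ≤ N := by
    rwa [← Real.sqrt_eq_rpow, Real.le_sqrt (Nat.cast_nonneg _) (Nat.cast_nonneg _)] at hqN
  have hrem : (N : ℝ) - (N / q : ℕ) * q ≤ q - 1 := by
    have : N + 1 ≤ N / q * q + q := Nat.lt_div_mul_add hq1
    have : ((N + 1 : ℕ) : ℝ) ≤ ((N / q * q + q : ℕ) : ℝ) := by exact_mod_cast this
    push_cast at this
    linarith
  exact (weyl_lower_bound_arith (by exact_mod_cast hq1) hq2N hrem).trans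
    (le_norm_weylSum hq hgcd hx ht)
end
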